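/- If Y : [0,T] → ℝ^{n×n} is differentiable with Y(0) = 0 and ‖Y'(t)‖ ≤ c₁‖Y(t)‖² + c₂ for all t ∈ [0,T] (with any norm on matrices), and if T < π/(2√(c₁c₂)), then ‖Y(t)‖ ≤ √(c₂/c₁)·tan(√(c₁c₂)·t) for all t ∈ [0,T]. -/

import Mathlib

/-!
`riccatiTan c₁ c t = √(c/c₁) tan(√(c₁c) t)` solves `u' = c₁u² + c`, `u 0 = 0`, up to its blow-up
at `√(c₁c) t = π/2`. For `c > c₂` its derivative strictly exceeds `c₁‖Y‖² + c₂` wherever `‖Y‖`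
touches it, so the fencing theorem keeps `‖Y‖` below it; the bound for `c₂` follows by letting
`c ↓ c₂`, since the barrier is continuous in `c`.
-/

open Real Set

open Filter Topology

noncomputable def riccatiTan (c₁ c t : ℝ) : ℝ := √(c / c₁) * tan (√(c₁ * c) * t)

lemma hasDerivAt_riccatiTan {c₁ c t : ℝ} (hc₁ : 0 < c₁) (hc : 0 ≤ c)
    (hcos : cos (√(c₁ * c) * t) ≠ 0) :
    HasDerivAt (riccatiTan c₁ c) (c₁ * riccatiTan c₁ c t ^ 2 + c) t := by
  have hlin : HasDerivAt (fun t => √(c₁ * c) * t) (√(c₁ * c)) t := by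
    simpa using (hasDerivAt_id t).const_mul (√(c₁ * c))
  have hscale : √(c / c₁) * √(c₁ * c) = c := by
    rw [← sqrt_mul (by positivity), show c / c₁ * (c₁ * c) = c ^ 2 by field_simp]
    exact sqrt_sq hc
  have hsq : c₁ * √(c / c₁) ^ 2 = c := by
    rw [sq_sqrt (by positivity)]
    field_simp
  refine (((hasDerivAt_tan hcos).comp t hlin).const_mul (√(c / c₁))).congr_deriv ?_
  rw [riccatiTan, one_div, ← inv_one_add_tan_sq hcos, inv_inv]
  linear_combination (1 + tan (√(c₁ * c) * t) ^ 2) * hscale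
    - tan (√(c₁ * c) * t) ^ 2 * hsq

lemma cos_mul_pos_of_mem_Icc {k T t : ℝ} (hk : 0 ≤ k) (hkT : k * T < π / 2)
    (ht : t ∈ Icc 0 T) : 0 < cos (k * t) := by
  apply cos_pos_of_mem_Ioo
  constructor
  · nlinarith [pi_pos, ht.1]
  · nlinarith [ht.2]

lemma norm_le_riccatiTan_of_lt {E : Type*} [NormedAddCommGroup E] [NormedSpace ℝ E]
    {c₁ c₂ c T : ℝ} (hc₁ : 0 < c₁) (hc : 0 ≤ c) (hc₂c : c₂ < c)
    (hcT : √(c₁ * c) * T < π / 2) {Y Y' : ℝ → E} (hY0 : Y 0 = 0)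
    (hderiv : ∀ t ∈ Icc (0 : ℝ) T, HasDerivAt Y (Y' t) t)
    (hbound : ∀ t ∈ Icc (0 : ℝ) T, ‖Y' t‖ ≤ c₁ * ‖Y t‖ ^ 2 + c₂) :
    ∀ t ∈ Icc (0 : ℝ) T, ‖Y t‖ ≤ riccatiTan c₁ c t := by
  have hB : ∀ t ∈ Icc (0 : ℝ) T,
      HasDerivAt (riccatiTan c₁ c) (c₁ * riccatiTan c₁ c t ^ 2 + c) t := fun t ht =>
    hasDerivAt_riccatiTan hc₁ hc (cos_mul_pos_of_mem_Icc (sqrt_nonneg _) hcT ht).ne'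
  intro t ht
  refine image_norm_le_of_norm_deriv_right_lt_deriv_boundary'
    (fun x hx => (hderiv x hx).continuousAt.continuousWithinAt)
    (fun x hx => (hderiv x (Ico_subset_Icc_self hx)).hasDerivWithinAt)
    (by simp [riccatiTan, hY0])
    (fun x hx => (hB x hx).continuousAt.continuousWithinAt)
    (fun x hx => (hB x (Ico_subset_Icc_self hx)).hasDerivWithinAt) ?_ ht
  intro x hx hx_eq
  calc ‖Y' x‖ ≤ c₁ * ‖Y x‖ ^ 2 + c₂ := hbound x (Ico_subset_Icc_self hx)
    _ < c₁ * riccatiTan c₁ c x ^ 2 + c := by rw [hx_eq]; linarith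

theorem stmt_2_general {E : Type*} [NormedAddCommGroup E] [NormedSpace ℝ E]
    (c₁ c₂ T : ℝ) (hc₁ : 0 < c₁) (hc₂ : 0 < c₂)
    (hT : T < Real.pi / (2 * Real.sqrt (c₁ * c₂)))
    (Y : ℝ → E) (Y' : ℝ → E)
    (hY0 : Y 0 = 0)
    (hderiv : ∀ t ∈ Set.Icc (0 : ℝ) T, HasDerivAt Y (Y' t) t)
    (hbound : ∀ t ∈ Set.Icc (0 : ℝ) T, ‖Y' t‖ ≤ c₁ * ‖Y t‖ ^ 2 + c₂) :
    ∀ t ∈ Set.Icc (0 : ℝ) T,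
      ‖Y t‖ ≤ Real.sqrt (c₂ / c₁) * Real.tan (Real.sqrt (c₁ * c₂) * t) := by
  intro t ht
  have hkT : √(c₁ * c₂) * T < π / 2 := by
    rw [lt_div_iff₀ (by positivity)] at hT
    linarith
  have hcont : ContinuousAt (fun c => riccatiTan c₁ c t) c₂ :=
    ContinuousAt.mul (by fun_prop) <| ContinuousAt.comp (f := fun c => √(c₁ * c) * t)
      (continuousAt_tan.2 (cos_mul_pos_of_mem_Icc (sqrt_nonneg _) hkT ht).ne') (by fun_prop)
  have hsmall : ∀ᶠ c in 𝓝 c₂, √(c₁ * c) * T < π / 2 :=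
    (by fun_prop : ContinuousAt (fun c => √(c₁ * c) * T) c₂).eventually_lt
      continuousAt_const hkT
  have hnear : ∀ᶠ c in 𝓝[>] c₂, ‖Y t‖ ≤ riccatiTan c₁ c t := by
    filter_upwards [self_mem_nhdsWithin, nhdsWithin_le_nhds hsmall] with c (hc : c₂ < c) hcT
    exact norm_le_riccatiTan_of_lt hc₁ (hc₂.trans hc).le hc hcT hY0 hderiv hbound t ht
  exact ge_of_tendsto (hcont.tendsto.mono_left nhdsWithin_le_nhds) hnear

/-- Comparison bound: if Y(0) = 0 and ‖Y'(t)‖ ≤ c₁‖Y(t)‖² + c₂ on [0,T] with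
T < π/(2√(c₁c₂)), then ‖Y(t)‖ ≤ √(c₂/c₁)·tan(√(c₁c₂)·t) on [0,T]. -/
theorem stmt_2 {E : Type*} [NormedAddCommGroup E] [NormedSpace ℝ E]
    (c₁ c₂ T : ℝ) (hc₁ : 0 < c₁) (hc₂ : 0 < c₂) (hT0 : 0 < T)
    (hT : T < Real.pi / (2 * Real.sqrt (c₁ * c₂)))
    (Y : ℝ → E) (Y' : ℝ → E)
    (hY0 : Y 0 = 0)
    (hderiv : ∀ t ∈ Set.Icc (0 : ℝ) T, HasDerivAt Y (Y' t) t)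
    (hbound : ∀ t ∈ Set.Icc (0 : ℝ) T, ‖Y' t‖ ≤ c₁ * ‖Y t‖ ^ 2 + c₂) :
    ∀ t ∈ Set.Icc (0 : ℝ) T,
      ‖Y t‖ ≤ Real.sqrt (c₂ / c₁) * Real.tan (Real.sqrt (c₁ * c₂) * t) :=
  stmt_2_general c₁ c₂ T hc₁ hc₂ hT Y Y' hY0 hderiv hbound
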